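/- arXiv:2409.18348 — 2 statements merged into one kernel-verified Lean document; each statement's English description precedes it below -/
import Mathlib

section
/- Let φ : ℝ → ℝ be a tropical rational function in one variable that is not identically −∞. Suppose (f, g) and (f', g') are two pairs of one-variable tropical polynomials (with f, g, f', g' ≠ −∞) such that φ = f ⊘ g = f' ⊘ g', both expressions have the minimum possible volume among all expressions of φ as a tropical quotient, and vol(f, g) = vol(f', g'). Then there exist a ∈ ℝ and k ∈ ℤ such that f'(x) = f(x) + a + kx and g'(x) = g(x) + a + kx for all x ∈ ℝ; in particular the lifted Newton polytope of f ⊕ (y ⊙ g) is a translate of that of f' ⊕ (y ⊙ g'), so the dual subdivision of the minimum-volume expression is unique up to translation. -/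
open scoped Pointwise
open MeasureTheory

/-- A tropical (Laurent) polynomial in `n` variables: a finite support of integer
exponent vectors together with real coefficients. -/
structure TropPoly (n : ℕ) where
  support : Finset (Fin n → ℤ)
  coeff : (Fin n → ℤ) → ℝ

namespace TropPoly

variable {n : ℕ}

/-- The affine term `c_i + ⟨i, x⟩` of a tropical polynomial. -/
noncomputable def term (f : TropPoly n) (i : Fin n → ℤ) (x : Fin n → ℝ) : ℝ :=
  f.coeff i + ∑ j, (i j : ℝ) * x j

/-- Evaluation of a tropical polynomial, with value `⊥ = -∞` when the support is empty. -/
noncomputable def eval (f : TropPoly n) (x : Fin n → ℝ) : EReal :=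
  f.support.sup fun i => ((f.term i x : ℝ) : EReal)

/-- The tropical hypersurface `V(f)`: points where the maximum is attained at least twice
(all of `ℝⁿ` when `f = -∞`). -/
def V (f : TropPoly n) : Set (Fin n → ℝ) :=
  {x | f.support = ∅ ∨ ∃ i ∈ f.support, ∃ j ∈ f.support, i ≠ j ∧
    f.eval x = (f.term i x : EReal) ∧ f.eval x = (f.term j x : EReal)}

/-- The tropical quotient `f ⊘ g` as an `EReal`-valued function. -/
noncomputable def tropDiv (f g : TropPoly n) (x : Fin n → ℝ) : EReal :=
  f.eval x - g.eval x

/-- Real realization of an integer exponent vector. -/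
def expR {m : ℕ} : (Fin m → ℤ) → (Fin m → ℝ) := fun i j => (i j : ℝ)

/-- The Newton polytope of a tropical polynomial. -/
noncomputable def Newt (f : TropPoly n) : Set (Fin n → ℝ) :=
  convexHull ℝ (expR '' (f.support : Set (Fin n → ℤ)))

/-- The polytope `conv(Newt(f) × {0} ∪ Newt(g) × {1}) ⊂ ℝ^{n+1}`, which is the Newton
polytope of `f ⊕ (x_{n+1} ⊙ g)`. -/
noncomputable def pairPolytope (f g : TropPoly n) : Set (Fin (n + 1) → ℝ) :=
  convexHull ℝ
    ((fun v : Fin n → ℝ => Fin.snoc v (0 : ℝ)) '' f.Newt ∪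
     (fun v : Fin n → ℝ => Fin.snoc v (1 : ℝ)) '' g.Newt)

open Classical in
/-- The volume of a pair of tropical polynomials: the `(n+1)`-dimensional Lebesgue measure
of `conv(Newt(f) × {0} ∪ Newt(g) × {1})` if it is full-dimensional, `0` otherwise. -/
noncomputable def vol (f g : TropPoly n) : ℝ :=
  if affineSpan ℝ (pairPolytope f g) = ⊤ then (volume (pairPolytope f g)).toReal else 0

open Classical in
/-- Monomial complexity: the number of linear regions of `f`. -/
noncomputable def mComp (f : TropPoly n) : ℕ :=
  (f.support.filter fun i =>
    (interior {x : Fin n → ℝ | f.eval x = (f.term i x : EReal)}).Nonempty).card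

/-- Factorization complexity of a factorization `f = f₁ ⊙ ⋯ ⊙ f_m`. -/
noncomputable def fComp (l : List (TropPoly n)) : ℤ :=
  (l.map fun h => (mComp h : ℤ)).sum - ((l.length : ℤ) - 1)

/-- A tropical polynomial is a unit (tropical monomial) if, as a function, it is
integer affine: `x ↦ a + ⟨k, x⟩`. -/
def IsUnit (g : TropPoly n) : Prop :=
  ∃ (a : ℝ) (k : Fin n → ℤ), ∀ x, g.eval x = ((a + ∑ j, (k j : ℝ) * x j : ℝ) : EReal)

/-- A tropical polynomial is irreducible if in any pointwise factorization
`f = g ⊙ h` one of the factors is a unit. -/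
def IsIrreducible (f : TropPoly n) : Prop :=
  ∀ g h : TropPoly n, (∀ x, f.eval x = g.eval x + h.eval x) → g.IsUnit ∨ h.IsUnit

/-- The tropical polynomial `f ⊕ (x_{n+1} ⊙ g)` in `n+1` variables, whose value at
`(x, t)` is `max (f x) (t + g x)`. -/
noncomputable def oplusShift (f g : TropPoly n) : TropPoly (n + 1) where
  support :=
    f.support.image (fun i => Fin.snoc i (0 : ℤ)) ∪
    g.support.image (fun i => Fin.snoc i (1 : ℤ))
  coeff := fun j =>
    if j (Fin.last n) = 0 then f.coeff (fun k => j k.castSucc)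
    else g.coeff (fun k => j k.castSucc)

open Classical in
/-- The tropical product `f ⊙ g`: supports add (Minkowski sum) and the coefficient of `k`
is the maximum of `f.coeff i + g.coeff j` over decompositions `k = i + j`. -/
noncomputable def tmul (f g : TropPoly n) : TropPoly n where
  support := f.support + g.support
  coeff := fun k =>
    WithBot.unbotD 0
      (((f.support ×ˢ g.support).filter fun p => p.1 + p.2 = k).sup
        fun p => ((f.coeff p.1 + g.coeff p.2 : ℝ) : WithBot ℝ))

end TropPoly

/-! In one variable `vol f g` is the area of a trapezoid, half the sum of the lengths of the Newton
segments of `f` and `g`. If `f` and `g` both had a kink at `x₀`, dividing both by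
`max(0, x - x₀)` would leave `f ⊘ g` unchanged and lower the volume by one; so in a minimum
volume expression `f` and `g` never kink at the same point. Comparing one-sided slopes in
`f - g = f' - g'` then shows that `g` and `g'` have the same slope jumps everywhere, so `g' - g`
is differentiable with integer derivative, hence integer affine by Darboux's theorem, and then so
is `f' - f`. -/

open Set Filter Topology MeasureTheory

theorem exists_eq_add_mul_of_hasDerivAt_intCast {h : ℝ → ℝ} {n : ℝ → ℤ}
    (hh : ∀ x, HasDerivAt h (n x) x) : ∃ (a : ℝ) (k : ℤ), ∀ x, h x = a + k * x := by
  have hle : ∀ x y, n x ≤ n y := by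
    intro x y
    by_contra! hlt
    have hoc : OrdConnected ((fun x => (n x : ℝ)) '' univ) :=
      ordConnected_univ.image_hasDerivWithinAt fun x _ => (hh x).hasDerivWithinAt
    have hlt' : (n y : ℝ) + 1 ≤ n x := by exact_mod_cast hlt
    -- Darboux: the derivative would take the non-integer value `n y + 1 / 2`
    obtain ⟨z, -, hz⟩ := hoc.out (mem_image_of_mem _ (mem_univ y))
      (mem_image_of_mem _ (mem_univ x)) (show (n y : ℝ) + 1 / 2 ∈ Icc _ _ from
        ⟨by linarith, by linarith⟩)
    have hz' : ((2 * (n z - n y) : ℤ) : ℝ) = 1 := by push_cast; linarith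
    have : 2 * (n z - n y) = 1 := by exact_mod_cast hz'
    omega
  refine ⟨h 0, n 0, fun x => ?_⟩
  have hderiv : ∀ y, HasDerivAt (fun y => h y - n 0 * y) 0 y := fun y => by
    have := (hh y).sub ((hasDerivAt_id' y).const_mul (n 0 : ℝ))
    rwa [le_antisymm (hle y 0) (hle 0 y), mul_one, sub_self] at this
  have := is_const_of_deriv_eq_zero (fun y => (hderiv y).differentiableAt)
    (fun y => (hderiv y).deriv) x 0
  simp only [mul_zero, sub_zero] at this
  linarith

def trapezoid (A B C D : ℝ) : Set (Fin 2 → ℝ) :=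
  {p | p 1 ∈ Icc 0 1 ∧ p 0 ∈ Icc ((1 - p 1) * A + p 1 * C) ((1 - p 1) * B + p 1 * D)}

theorem convex_trapezoid (A B C D : ℝ) : Convex ℝ (trapezoid A B C D) := by
  rintro p ⟨⟨hp0, hp1⟩, hpL, hpR⟩ q ⟨⟨hq0, hq1⟩, hqL, hqR⟩ a b ha hb hab
  simp only [trapezoid, mem_ofPred_eq, mem_Icc, Pi.add_apply, Pi.smul_apply, smul_eq_mul]
  obtain rfl : b = 1 - a := by linarith
  refine ⟨⟨by positivity, by nlinarith⟩, ?_, ?_⟩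
  · nlinarith [mul_le_mul_of_nonneg_left hpL ha, mul_le_mul_of_nonneg_left hqL hb]
  · nlinarith [mul_le_mul_of_nonneg_left hpR ha, mul_le_mul_of_nonneg_left hqR hb]

theorem trapezoid_subset_convexHull (A B C D : ℝ) :
    trapezoid A B C D ⊆ convexHull ℝ {![A, 0], ![B, 0], ![C, 1], ![D, 1]} := by
  rintro p ⟨⟨ht0, ht1⟩, hL, hR⟩
  set t := p 1
  set L := (1 - t) * A + t * C
  set R := (1 - t) * B + t * D
  -- the relative position of `p 0` in `[L, R]`; when `L = R` the division gives `0`, also fine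
  set s := (p 0 - L) / (R - L)
  have hs : s * (R - L) = p 0 - L := div_mul_cancel_of_imp fun h => by linarith
  have hs0 : 0 ≤ s := div_nonneg (by linarith) (by linarith)
  have hs1 : s ≤ 1 := div_le_one_of_le₀ (by linarith) (by linarith)
  have hbot : ![A + s * (B - A), 0] ∈ convexHull ℝ {![A, 0], ![B, 0], ![C, 1], ![D, 1]} :=
    segment_subset_convexHull (x := ![A, 0]) (y := ![B, 0]) (by simp) (by simp)
      ⟨1 - s, s, by linarith, hs0, by ring, by ext j; fin_cases j <;> simp; ring⟩
  have htop : ![C + s * (D - C), 1] ∈ convexHull ℝ {![A, 0], ![B, 0], ![C, 1], ![D, 1]} :=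
    segment_subset_convexHull (x := ![C, 1]) (y := ![D, 1]) (by simp) (by simp)
      ⟨1 - s, s, by linarith, hs0, by ring, by ext j; fin_cases j <;> simp; ring⟩
  convert (convex_convexHull ℝ _) hbot htop (sub_nonneg.2 ht1) ht0 (by ring) using 1
  ext j; fin_cases j
  · simp only [Fin.zero_eta, Fin.isValue, Matrix.smul_cons, smul_eq_mul, mul_zero, mul_one,
      Matrix.smul_empty, Pi.add_apply, Matrix.cons_val_zero]
    linarith
  · simp [t]

theorem integral_one_sub_mul_add_mul (a b : ℝ) :
    ∫ y in (0 : ℝ)..1, (1 - y) * a + y * b = (a + b) / 2 := by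
  have : (fun y : ℝ => (1 - y) * a + y * b) = fun y => a + (b - a) * y := by ext y; ring
  rw [this, intervalIntegral.integral_add intervalIntegrable_const
    ((continuous_const_mul (b - a)).intervalIntegrable 0 1), intervalIntegral.integral_const_mul,
    intervalIntegral.integral_const, integral_id]
  ring

theorem volume_trapezoid {A B C D : ℝ} (hAB : A ≤ B) (hCD : C ≤ D) :
    volume (trapezoid A B C D) = ENNReal.ofReal ((B - A + (D - C)) / 2) := by
  set T : Set (ℝ × ℝ) :=
    {q | q.2 ∈ Icc 0 1 ∧ q.1 ∈ Icc ((1 - q.2) * A + q.2 * C) ((1 - q.2) * B + q.2 * D)}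
  have hT : MeasurableSet T := by
    refine IsClosed.measurableSet ?_
    simp only [T, mem_Icc, ofPred_and]
    refine ((isClosed_le ?_ ?_).inter (isClosed_le ?_ ?_)).inter
      ((isClosed_le ?_ ?_).inter (isClosed_le ?_ ?_)) <;> fun_prop
  have hslice : ∀ y : ℝ, volume ((fun x => (x, y)) ⁻¹' T) = (Icc (0 : ℝ) 1).indicator
      (fun y => ENNReal.ofReal ((1 - y) * (B - A) + y * (D - C))) y := by
    intro y
    by_cases hy : y ∈ Icc (0 : ℝ) 1
    · have : (fun x => (x, y)) ⁻¹' T = Icc ((1 - y) * A + y * C) ((1 - y) * B + y * D) := by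
        ext x; simp [T, hy.1, hy.2]
      rw [indicator_of_mem hy, this, Real.volume_Icc]
      congr 1; ring
    · have : (fun x => (x, y)) ⁻¹' T = ∅ := by
        ext x; simp only [T, mem_preimage, mem_ofPred_eq, mem_empty_iff_false, iff_false]
        exact fun h => hy h.1
      rw [indicator_of_notMem hy, this, measure_empty]
  rw [show trapezoid A B C D = MeasurableEquiv.finTwoArrow ⁻¹' T from rfl,
    (volume_preserving_finTwoArrow ℝ).measure_preimage hT.nullMeasurableSet,
    Measure.volume_eq_prod, Measure.prod_apply_symm hT, lintegral_congr hslice,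
    lintegral_indicator measurableSet_Icc, ← ofReal_integral_eq_lintegral_ofReal,
    integral_Icc_eq_integral_Ioc, ← intervalIntegral.integral_of_le zero_le_one,
    integral_one_sub_mul_add_mul]
  · exact Continuous.integrableOn_Icc (by fun_prop)
  · filter_upwards [ae_restrict_mem measurableSet_Icc] with y hy
    simp only [Pi.zero_apply]
    nlinarith [hy.1, hy.2]


namespace TropPoly

section OneVariable

variable (f : TropPoly 1) (hf : f.support.Nonempty)

noncomputable def eval₁ (x : ℝ) : ℝ :=
  f.support.sup' hf fun i => f.coeff i + i 0 * x

theorem eval_eq_eval₁ (x : Fin 1 → ℝ) : f.eval x = (f.eval₁ hf (x 0) : EReal) := by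
  rw [eval, ← Finset.sup'_eq_sup hf, eval₁,
    Finset.apply_sup'_eq_sup'_comp hf _ fun a b => EReal.coe_strictMono.monotone.map_max]
  simp [term, Function.comp_def]

variable {f}

theorem coeff_add_mul_le_eval₁ {i : Fin 1 → ℤ} (hi : i ∈ f.support) (x : ℝ) :
    f.coeff i + i 0 * x ≤ f.eval₁ hf x :=
  Finset.le_sup' (fun i => f.coeff i + i 0 * x) hi

variable (f)

open Classical in
noncomputable def active (x : ℝ) : Finset (Fin 1 → ℤ) :=
  f.support.filter fun i => f.coeff i + i 0 * x = f.eval₁ hf x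

theorem active_nonempty (x : ℝ) : (f.active hf x).Nonempty := by
  obtain ⟨i, hi, h⟩ := Finset.exists_mem_eq_sup' hf fun i => f.coeff i + i 0 * x
  exact ⟨i, Finset.mem_filter.2 ⟨hi, h.symm⟩⟩

variable {f hf}

theorem mem_active {i : Fin 1 → ℤ} {x : ℝ} :
    i ∈ f.active hf x ↔ i ∈ f.support ∧ f.coeff i + i 0 * x = f.eval₁ hf x := by
  classical
  simp [active]

theorem eval₁_add_mul_le_eval₁ {i : Fin 1 → ℤ} {x : ℝ} (hi : i ∈ f.active hf x)
    (y : ℝ) :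
    f.eval₁ hf x + i 0 * (y - x) ≤ f.eval₁ hf y := by
  have := coeff_add_mul_le_eval₁ hf (mem_active.1 hi).1 y
  linarith [(mem_active.1 hi).2]

theorem exp_le_of_mem_active_of_lt {i j : Fin 1 → ℤ} {x y : ℝ} (hi : i ∈ f.active hf x)
    (hj : j ∈ f.active hf y) (hxy : x < y) : i 0 ≤ j 0 := by
  have := eval₁_add_mul_le_eval₁ hi y
  have := eval₁_add_mul_le_eval₁ hj x
  exact_mod_cast (le_of_mul_le_mul_right (by linarith) (sub_pos.2 hxy) : (i 0 : ℝ) ≤ j 0)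

variable (f hf)

noncomputable def rightSlope (x : ℝ) : ℤ := (f.active hf x).sup' (f.active_nonempty hf x) (· 0)

noncomputable def leftSlope (x : ℝ) : ℤ := (f.active hf x).inf' (f.active_nonempty hf x) (· 0)

theorem exists_mem_active_eq_rightSlope (x : ℝ) :
    ∃ i ∈ f.active hf x, i 0 = f.rightSlope hf x :=
  (Finset.exists_mem_eq_sup' _ _).imp fun _ h => ⟨h.1, h.2.symm⟩

theorem exists_mem_active_eq_leftSlope (x : ℝ) :
    ∃ i ∈ f.active hf x, i 0 = f.leftSlope hf x :=
  (Finset.exists_mem_eq_inf' _ _).imp fun _ h => ⟨h.1, h.2.symm⟩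

variable {f hf}

theorem le_rightSlope {i : Fin 1 → ℤ} {x : ℝ} (hi : i ∈ f.active hf x) :
    i 0 ≤ f.rightSlope hf x :=
  Finset.le_sup' (· 0) hi

theorem leftSlope_le {i : Fin 1 → ℤ} {x : ℝ} (hi : i ∈ f.active hf x) :
    f.leftSlope hf x ≤ i 0 :=
  Finset.inf'_le (· 0) hi

theorem leftSlope_le_rightSlope (x : ℝ) : f.leftSlope hf x ≤ f.rightSlope hf x := by
  obtain ⟨i, hi, -⟩ := f.exists_mem_active_eq_rightSlope hf x
  exact (leftSlope_le hi).trans (le_rightSlope hi)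

theorem eventually_eval₁_eq {s : Set ℝ} {i : Fin 1 → ℤ} {x : ℝ} (hi : i ∈ f.active hf x)
    (hs : ∀ j ∈ f.active hf x, ∀ y ∈ s, (j 0 : ℝ) * (y - x) ≤ i 0 * (y - x)) :
    ∀ᶠ y in 𝓝[s] x, f.eval₁ hf y = f.eval₁ hf x + i 0 * (y - x) := by
  have hterm : ∀ j ∈ f.support, ∀ᶠ y in 𝓝[s] x,
      f.coeff j + j 0 * y ≤ f.eval₁ hf x + i 0 * (y - x) := by
    intro j hj
    by_cases hja : j ∈ f.active hf x
    · filter_upwards [self_mem_nhdsWithin] with y hy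
      linarith [hs j hja y hy, (mem_active.1 hja).2]
    · have hlt : f.coeff j + j 0 * x < f.eval₁ hf x + i 0 * (x - x) := by
        rw [sub_self, mul_zero, add_zero]
        exact (coeff_add_mul_le_eval₁ hf hj x).lt_of_ne fun h => hja (mem_active.2 ⟨hj, h⟩)
      have hev : ∀ᶠ y in 𝓝 x, f.coeff j + j 0 * y < f.eval₁ hf x + i 0 * (y - x) :=
        ContinuousAt.eventually_lt (by fun_prop) (by fun_prop) hlt
      exact nhdsWithin_le_nhds (hev.mono fun y hy => hy.le)
  filter_upwards [(eventually_all_finset _).2 hterm] with y hy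
  exact le_antisymm (Finset.sup'_le _ _ hy) (eval₁_add_mul_le_eval₁ hi y)

theorem hasDerivWithinAt_eval₁_of_mem_active {s : Set ℝ} {i : Fin 1 → ℤ} {x : ℝ}
    (hi : i ∈ f.active hf x)
    (hs : ∀ j ∈ f.active hf x, ∀ y ∈ s, (j 0 : ℝ) * (y - x) ≤ i 0 * (y - x)) :
    HasDerivWithinAt (f.eval₁ hf) (i 0) s x := by
  have hlin : HasDerivWithinAt (fun y => f.eval₁ hf x + i 0 * (y - x)) (i 0) s x := by
    simpa using (((hasDerivWithinAt_id x s).sub_const x).const_mul (i 0 : ℝ)).const_add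
      (f.eval₁ hf x)
  exact hlin.congr_of_eventuallyEq (eventually_eval₁_eq hi hs) (by simp)

variable (f hf)

theorem hasDerivWithinAt_eval₁_Ici (x : ℝ) :
    HasDerivWithinAt (f.eval₁ hf) (f.rightSlope hf x) (Ici x) x := by
  obtain ⟨i, hi, hi0⟩ := f.exists_mem_active_eq_rightSlope hf x
  rw [← hi0]
  refine hasDerivWithinAt_eval₁_of_mem_active hi fun j hj y hy => ?_
  exact mul_le_mul_of_nonneg_right (by exact_mod_cast hi0 ▸ le_rightSlope hj) (sub_nonneg.2 hy)

theorem hasDerivWithinAt_eval₁_Iic (x : ℝ) :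
    HasDerivWithinAt (f.eval₁ hf) (f.leftSlope hf x) (Iic x) x := by
  obtain ⟨i, hi, hi0⟩ := f.exists_mem_active_eq_leftSlope hf x
  rw [← hi0]
  refine hasDerivWithinAt_eval₁_of_mem_active hi fun j hj y hy => ?_
  exact mul_le_mul_of_nonpos_right (by exact_mod_cast hi0 ▸ leftSlope_le hj) (sub_nonpos.2 hy)

end OneVariable

theorem vol_eq_toReal_volume {n : ℕ} (f g : TropPoly n) :
    vol f g = (volume (pairPolytope f g)).toReal := by
  rw [vol]
  split_ifs with h
  · rfl
  · rw [measure_mono_null (subset_affineSpan ℝ _) (Measure.addHaar_affineSubspace volume _ h),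
      ENNReal.toReal_zero]

section Exponents

variable (f : TropPoly 1) (hf : f.support.Nonempty)

noncomputable def minExp : ℤ := (f.support.image (· 0)).min' (hf.image _)

noncomputable def maxExp : ℤ := (f.support.image (· 0)).max' (hf.image _)

noncomputable def width : ℤ := f.maxExp hf - f.minExp hf

theorem exists_mem_support_eq_minExp : ∃ i ∈ f.support, i 0 = f.minExp hf :=
  Finset.mem_image.1 (Finset.min'_mem _ _)

theorem exists_mem_support_eq_maxExp : ∃ i ∈ f.support, i 0 = f.maxExp hf :=
  Finset.mem_image.1 (Finset.max'_mem _ _)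

variable {f hf}

theorem le_minExp_iff {m : ℤ} : m ≤ f.minExp hf ↔ ∀ i ∈ f.support, m ≤ i 0 := by
  simp [minExp, Finset.le_min'_iff]

theorem maxExp_le_iff {m : ℤ} : f.maxExp hf ≤ m ↔ ∀ i ∈ f.support, i 0 ≤ m := by
  simp [maxExp, Finset.max'_le_iff]

theorem minExp_le {i : Fin 1 → ℤ} (hi : i ∈ f.support) : f.minExp hf ≤ i 0 :=
  le_minExp_iff.1 le_rfl i hi

theorem le_maxExp {i : Fin 1 → ℤ} (hi : i ∈ f.support) : i 0 ≤ f.maxExp hf :=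
  maxExp_le_iff.1 le_rfl i hi

theorem minExp_le_maxExp : f.minExp hf ≤ f.maxExp hf := by
  obtain ⟨i, hi, -⟩ := f.exists_mem_support_eq_minExp hf
  exact (minExp_le hi).trans (le_maxExp hi)

end Exponents

theorem snoc_expR (i : Fin 1 → ℤ) (c : ℝ) :
    (Fin.snoc (expR i) c : Fin 2 → ℝ) = ![(i 0 : ℝ), c] := by
  ext j; fin_cases j <;> rfl

theorem pairPolytope_eq_trapezoid {f g : TropPoly 1} (hf : f.support.Nonempty)
    (hg : g.support.Nonempty) :
    pairPolytope f g = trapezoid (f.minExp hf) (f.maxExp hf) (g.minExp hg) (g.maxExp hg) := by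
  have newt_subset : ∀ (h : TropPoly 1) (hh : h.support.Nonempty),
      h.Newt ⊆ {v | v 0 ∈ Icc (h.minExp hh : ℝ) (h.maxExp hh)} := fun h hh =>
    convexHull_min (by
      rintro _ ⟨i, hi, rfl⟩
      exact ⟨show (_ : ℝ) ≤ i 0 by exact_mod_cast minExp_le hi,
        show (i 0 : ℝ) ≤ _ by exact_mod_cast le_maxExp hi⟩)
      ((convex_Icc _ _).linear_preimage (LinearMap.proj 0))
  apply (convexHull_min _ (convex_trapezoid _ _ _ _)).antisymm
  · refine (trapezoid_subset_convexHull _ _ _ _).trans (convexHull_mono ?_)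
    obtain ⟨i, hi, hi0⟩ := f.exists_mem_support_eq_minExp hf
    obtain ⟨j, hj, hj0⟩ := f.exists_mem_support_eq_maxExp hf
    obtain ⟨k, hk, hk0⟩ := g.exists_mem_support_eq_minExp hg
    obtain ⟨l, hl, hl0⟩ := g.exists_mem_support_eq_maxExp hg
    have mem_newt : ∀ {h : TropPoly 1} {i}, i ∈ h.support → expR i ∈ h.Newt :=
      fun hi => subset_convexHull ℝ _ (mem_image_of_mem _ hi)
    simp only [insert_subset_iff, singleton_subset_iff, ← hi0, ← hj0, ← hk0, ← hl0,
      ← snoc_expR]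
    exact ⟨.inl (mem_image_of_mem _ (mem_newt hi)), .inl (mem_image_of_mem _ (mem_newt hj)),
      .inr (mem_image_of_mem _ (mem_newt hk)), .inr (mem_image_of_mem _ (mem_newt hl))⟩
  · rintro _ (⟨v, hv, rfl⟩ | ⟨v, hv, rfl⟩)
    · have := newt_subset f hf hv
      simp_all [trapezoid, Fin.snoc]
    · have := newt_subset g hg hv
      simp_all [trapezoid, Fin.snoc]

theorem vol_eq_width_add_width {f g : TropPoly 1} (hf : f.support.Nonempty)
    (hg : g.support.Nonempty) : vol f g = (f.width hf + g.width hg : ℝ) / 2 := by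
  have hf' : (f.minExp hf : ℝ) ≤ f.maxExp hf := by exact_mod_cast minExp_le_maxExp
  have hg' : (g.minExp hg : ℝ) ≤ g.maxExp hg := by exact_mod_cast minExp_le_maxExp
  rw [vol_eq_toReal_volume, pairPolytope_eq_trapezoid hf hg, volume_trapezoid hf' hg',
    ENNReal.toReal_ofReal (by linarith)]
  simp [width]

/-- The quotient of `f` by `max(0, x - x₀)` when `f` has a kink at `x₀` with left slope `p`:
terms of slope `≤ p` are kept, those of slope `> p + 1` lose one unit of slope, and those of slope
`p + 1` are dropped, being dominated by the active term of slope `p`. -/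
noncomputable def divRelu (f : TropPoly 1) (p : ℤ) (x₀ : ℝ) : TropPoly 1 where
  support := f.support.filter (· 0 ≤ p) ∪ (f.support.filter (p + 1 < · 0)).image (· - 1)
  coeff i := if i 0 ≤ p then f.coeff i else f.coeff (i + 1) + x₀

section DivRelu

variable {f : TropPoly 1} {hf : f.support.Nonempty} {x₀ : ℝ}

theorem divRelu_support_nonempty (x₀ : ℝ) :
    (f.divRelu (f.leftSlope hf x₀) x₀).support.Nonempty := by
  obtain ⟨i, hi, hi0⟩ := f.exists_mem_active_eq_leftSlope hf x₀
  exact ⟨i, Finset.mem_union_left _ (Finset.mem_filter.2 ⟨(mem_active.1 hi).1, hi0.le⟩)⟩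

theorem coeff_add_mul_le_eval₁_sub_relu (hk : f.leftSlope hf x₀ < f.rightSlope hf x₀)
    {i : Fin 1 → ℤ} (hi : i ∈ f.support) (hip : i 0 ≤ f.leftSlope hf x₀) (x : ℝ) :
    f.coeff i + i 0 * x ≤ f.eval₁ hf x - max 0 (x - x₀) := by
  obtain ⟨iq, hiq, hiq0⟩ := f.exists_mem_active_eq_rightSlope hf x₀
  have hq := eval₁_add_mul_le_eval₁ hiq x
  have := coeff_add_mul_le_eval₁ hf hi x₀
  have : (i 0 : ℝ) + 1 ≤ iq 0 := by exact_mod_cast hiq0 ▸ (hip.trans_lt hk)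
  rcases le_total x x₀ with hx | hx
  · rw [max_eq_left (by linarith)]; linarith [coeff_add_mul_le_eval₁ hf hi x]
  · rw [max_eq_right (by linarith)]; nlinarith

theorem coeff_add_mul_sub_relu_le_eval₁_sub_relu {i : Fin 1 → ℤ} (hi : i ∈ f.support)
    (hip : f.leftSlope hf x₀ < i 0) (x : ℝ) :
    f.coeff i + i 0 * x - (x - x₀) ≤ f.eval₁ hf x - max 0 (x - x₀) := by
  obtain ⟨ip, hip', hip0⟩ := f.exists_mem_active_eq_leftSlope hf x₀
  have hp := eval₁_add_mul_le_eval₁ hip' x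
  have := coeff_add_mul_le_eval₁ hf hi x₀
  have : (ip 0 : ℝ) + 1 ≤ i 0 := by exact_mod_cast hip0 ▸ hip
  rcases le_total x x₀ with hx | hx
  · rw [max_eq_left (by linarith)]; nlinarith
  · rw [max_eq_right (by linarith)]; linarith [coeff_add_mul_le_eval₁ hf hi x]

theorem eval₁_divRelu_le (hk : f.leftSlope hf x₀ < f.rightSlope hf x₀)
    (hu : (f.divRelu (f.leftSlope hf x₀) x₀).support.Nonempty) (x : ℝ) :
    (f.divRelu (f.leftSlope hf x₀) x₀).eval₁ hu x ≤ f.eval₁ hf x - max 0 (x - x₀) := by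
  refine Finset.sup'_le _ _ fun i hi => ?_
  simp only [divRelu, Finset.mem_union, Finset.mem_filter, Finset.mem_image] at hi
  rcases hi with ⟨hi, hip⟩ | ⟨i, ⟨hi, hip⟩, rfl⟩
  · simpa [divRelu, hip] using coeff_add_mul_le_eval₁_sub_relu hk hi hip x
  · have hle : ¬ i 0 ≤ f.leftSlope hf x₀ + 1 := by omega
    have := coeff_add_mul_sub_relu_le_eval₁_sub_relu (x₀ := x₀) hi
      (by omega : f.leftSlope hf x₀ < i 0) x
    simp only [divRelu, Pi.sub_apply, Pi.one_apply, tsub_le_iff_right, hle, if_false,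
      sub_add_cancel, Int.cast_sub, Int.cast_one]
    linarith

theorem le_eval₁_divRelu (hu : (f.divRelu (f.leftSlope hf x₀) x₀).support.Nonempty)
    (x : ℝ) :
    f.eval₁ hf x - max 0 (x - x₀) ≤ (f.divRelu (f.leftSlope hf x₀) x₀).eval₁ hu x := by
  obtain ⟨ip, hip, hip0⟩ := f.exists_mem_active_eq_leftSlope hf x₀
  obtain ⟨j, hj⟩ := f.active_nonempty hf x
  generalize f.leftSlope hf x₀ = p at *
  obtain ⟨hjs, hjx⟩ := mem_active.1 hj
  by_cases hjp : j 0 ≤ p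
  · refine Finset.le_sup'_of_le _ (Finset.mem_union_left _ (Finset.mem_filter.2 ⟨hjs, hjp⟩)) ?_
    simp only [divRelu, hjp, if_true]
    linarith [le_max_left 0 (x - x₀)]
  have hx : x₀ ≤ x := by
    by_contra! hx
    exact hjp (hip0 ▸ exp_le_of_mem_active_of_lt hj hip hx)
  rw [max_eq_right (by linarith)]
  by_cases hjp' : p + 1 < j 0
  · have hmem : j - 1 ∈ (f.divRelu p x₀).support :=
      Finset.mem_union_right _ (Finset.mem_image_of_mem _ (Finset.mem_filter.2 ⟨hjs, hjp'⟩))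
    refine Finset.le_sup'_of_le _ hmem ?_
    have : ¬ j 0 ≤ p + 1 := by omega
    simp only [divRelu, Pi.sub_apply, Pi.one_apply, tsub_le_iff_right, this, if_false,
      sub_add_cancel, Int.cast_sub, Int.cast_one]
    linarith
  · have hj1 : (j 0 : ℝ) = p + 1 := by exact_mod_cast (by omega : j 0 = p + 1)
    have hip_mem : ip ∈ (f.divRelu p x₀).support :=
      Finset.mem_union_left _ (Finset.mem_filter.2 ⟨(mem_active.1 hip).1, hip0.le⟩)
    have hipx₀ := (mem_active.1 hip).2
    have := coeff_add_mul_le_eval₁ hf hjs x₀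
    refine Finset.le_sup'_of_le _ hip_mem ?_
    simp only [divRelu, hip0, le_refl, if_true]
    rw [hip0] at hipx₀
    nlinarith

theorem eval₁_divRelu (hk : f.leftSlope hf x₀ < f.rightSlope hf x₀)
    (hu : (f.divRelu (f.leftSlope hf x₀) x₀).support.Nonempty) (x : ℝ) :
    (f.divRelu (f.leftSlope hf x₀) x₀).eval₁ hu x = f.eval₁ hf x - max 0 (x - x₀) :=
  (eval₁_divRelu_le hk hu x).antisymm (le_eval₁_divRelu hu x)

theorem width_divRelu_le (hk : f.leftSlope hf x₀ < f.rightSlope hf x₀)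
    (hu : (f.divRelu (f.leftSlope hf x₀) x₀).support.Nonempty) :
    (f.divRelu (f.leftSlope hf x₀) x₀).width hu ≤ f.width hf - 1 := by
  obtain ⟨ip, hip, hip0⟩ := f.exists_mem_active_eq_leftSlope hf x₀
  obtain ⟨iq, hiq, hiq0⟩ := f.exists_mem_active_eq_rightSlope hf x₀
  have hlo := minExp_le (hf := hf) (mem_active.1 hip).1
  have hhi := le_maxExp (hf := hf) (mem_active.1 hiq).1
  have hbounds : ∀ i ∈ (f.divRelu (f.leftSlope hf x₀) x₀).support,
      f.minExp hf ≤ i 0 ∧ i 0 ≤ f.maxExp hf - 1 := by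
    intro i hi
    simp only [divRelu, Finset.mem_union, Finset.mem_filter, Finset.mem_image] at hi
    rcases hi with ⟨hi, hip⟩ | ⟨i, ⟨hi, hip⟩, rfl⟩
    · exact ⟨minExp_le hi, by omega⟩
    · have := le_maxExp (hf := hf) hi
      simp only [Pi.sub_apply, Pi.one_apply]
      omega
  have := le_minExp_iff (hf := hu).2 fun i hi => (hbounds i hi).1
  have := maxExp_le_iff (hf := hu).2 fun i hi => (hbounds i hi).2
  rw [width, width]
  omega

end DivRelu

theorem tropDiv_eq (f g : TropPoly 1) (hf : f.support.Nonempty) (hg : g.support.Nonempty)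
    (x : Fin 1 → ℝ) :
    tropDiv f g x = ((f.eval₁ hf (x 0) - g.eval₁ hg (x 0) : ℝ) : EReal) := by
  rw [tropDiv, eval_eq_eval₁ f hf, eval_eq_eval₁ g hg, EReal.coe_sub]

theorem tropDiv_eq_tropDiv_iff {f g f' g' : TropPoly 1} (hf : f.support.Nonempty)
    (hg : g.support.Nonempty) (hf' : f'.support.Nonempty) (hg' : g'.support.Nonempty) :
    (∀ x, tropDiv f g x = tropDiv f' g' x) ↔
      ∀ x : ℝ, f.eval₁ hf x - g.eval₁ hg x = f'.eval₁ hf' x - g'.eval₁ hg' x := by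
  simp only [tropDiv_eq _ _ hf hg, tropDiv_eq _ _ hf' hg', EReal.coe_eq_coe_iff]
  exact ⟨fun h x => h fun _ => x, fun h x => h (x 0)⟩

def IsMinVol {n : ℕ} (f g : TropPoly n) : Prop :=
  ∀ f'' g'' : TropPoly n, g''.support.Nonempty →
    (∀ x, tropDiv f'' g'' x = tropDiv f g x) → vol f g ≤ vol f'' g''

theorem IsMinVol.leftSlope_eq_rightSlope_or {f g : TropPoly 1} (h : IsMinVol f g)
    (hf : f.support.Nonempty) (hg : g.support.Nonempty) (x₀ : ℝ) :
    f.leftSlope hf x₀ = f.rightSlope hf x₀ ∨ g.leftSlope hg x₀ = g.rightSlope hg x₀ := by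
  by_contra! hkink
  have hkf := (leftSlope_le_rightSlope x₀).lt_of_ne hkink.1
  have hkg := (leftSlope_le_rightSlope x₀).lt_of_ne hkink.2
  have hu := divRelu_support_nonempty (hf := hf) x₀
  have hv := divRelu_support_nonempty (hf := hg) x₀
  have hle := h _ _ hv <| (tropDiv_eq_tropDiv_iff hu hv hf hg).2 fun x => by
    rw [eval₁_divRelu hkf, eval₁_divRelu hkg]; ring
  rw [vol_eq_width_add_width hf hg, vol_eq_width_add_width hu hv] at hle
  have hu' : ((f.divRelu _ x₀).width hu : ℝ) ≤ f.width hf - 1 := by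
    exact_mod_cast width_divRelu_le hkf hu
  have hv' : ((g.divRelu _ x₀).width hv : ℝ) ≤ g.width hg - 1 := by
    exact_mod_cast width_divRelu_le hkg hv
  linarith

section Slopes

variable {f g f' g' : TropPoly 1} {hf : f.support.Nonempty} {hg : g.support.Nonempty}
  {hf' : f'.support.Nonempty} {hg' : g'.support.Nonempty}

theorem rightSlope_sub_eq
    (h : ∀ x, f.eval₁ hf x - g.eval₁ hg x = f'.eval₁ hf' x - g'.eval₁ hg' x) (x : ℝ) :
    f.rightSlope hf x - g.rightSlope hg x = f'.rightSlope hf' x - g'.rightSlope hg' x := by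
  have h₁ := (f.hasDerivWithinAt_eval₁_Ici hf x).sub (g.hasDerivWithinAt_eval₁_Ici hg x)
  have h₂ := (f'.hasDerivWithinAt_eval₁_Ici hf' x).sub (g'.hasDerivWithinAt_eval₁_Ici hg' x)
  rw [show f.eval₁ hf - g.eval₁ hg = f'.eval₁ hf' - g'.eval₁ hg' from funext h] at h₁
  exact_mod_cast (uniqueDiffWithinAt_Ici x).eq_deriv _ h₁ h₂

theorem leftSlope_sub_eq
    (h : ∀ x, f.eval₁ hf x - g.eval₁ hg x = f'.eval₁ hf' x - g'.eval₁ hg' x) (x : ℝ) :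
    f.leftSlope hf x - g.leftSlope hg x = f'.leftSlope hf' x - g'.leftSlope hg' x := by
  have h₁ := (f.hasDerivWithinAt_eval₁_Iic hf x).sub (g.hasDerivWithinAt_eval₁_Iic hg x)
  have h₂ := (f'.hasDerivWithinAt_eval₁_Iic hf' x).sub (g'.hasDerivWithinAt_eval₁_Iic hg' x)
  rw [show f.eval₁ hf - g.eval₁ hg = f'.eval₁ hf' - g'.eval₁ hg' from funext h] at h₁
  exact_mod_cast (uniqueDiffWithinAt_Iic x).eq_deriv _ h₁ h₂

theorem exists_eval₁_eq_add_add_mul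
    (h : ∀ x, f.eval₁ hf x - g.eval₁ hg x = f'.eval₁ hf' x - g'.eval₁ hg' x)
    (hfg : ∀ x, f.leftSlope hf x = f.rightSlope hf x ∨ g.leftSlope hg x = g.rightSlope hg x)
    (hfg' : ∀ x,
      f'.leftSlope hf' x = f'.rightSlope hf' x ∨ g'.leftSlope hg' x = g'.rightSlope hg' x) :
    ∃ (a : ℝ) (k : ℤ), ∀ x, g'.eval₁ hg' x = g.eval₁ hg x + (a + k * x) := by
  have hjump : ∀ x, g'.leftSlope hg' x - g.leftSlope hg x =
      g'.rightSlope hg' x - g.rightSlope hg x := by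
    intro x
    have := rightSlope_sub_eq h x
    have := leftSlope_sub_eq h x
    have := leftSlope_le_rightSlope (hf := hf) x
    have := leftSlope_le_rightSlope (hf := hg) x
    have := leftSlope_le_rightSlope (hf := hf') x
    have := leftSlope_le_rightSlope (hf := hg') x
    rcases hfg x with _ | _ <;> rcases hfg' x with _ | _ <;> omega
  have hderiv : ∀ x, HasDerivAt (fun y => g'.eval₁ hg' y - g.eval₁ hg y)
      ((g'.rightSlope hg' x - g.rightSlope hg x : ℤ) : ℝ) x := by
    intro x
    have hl := (g'.hasDerivWithinAt_eval₁_Iic hg' x).sub (g.hasDerivWithinAt_eval₁_Iic hg x)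
    have hr := (g'.hasDerivWithinAt_eval₁_Ici hg' x).sub (g.hasDerivWithinAt_eval₁_Ici hg x)
    rw [← Int.cast_sub, hjump] at hl
    rw [← Int.cast_sub] at hr
    rw [← hasDerivWithinAt_univ, ← Iic_union_Ici]
    exact hl.union hr
  obtain ⟨a, k, hak⟩ := exists_eq_add_mul_of_hasDerivAt_intCast hderiv
  exact ⟨a, k, fun x => by linarith [hak x]⟩

end Slopes

end TropPoly

theorem min_vol_expression_unique_general (f g f' g' : TropPoly 1)
    (hf : f.support.Nonempty) (hg : g.support.Nonempty)
    (hf' : f'.support.Nonempty) (hg' : g'.support.Nonempty)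
    (heq : ∀ x, TropPoly.tropDiv f g x = TropPoly.tropDiv f' g' x)
    (hmin : ∀ f'' g'' : TropPoly 1, g''.support.Nonempty →
      (∀ x, TropPoly.tropDiv f'' g'' x = TropPoly.tropDiv f g x) →
      TropPoly.vol f g ≤ TropPoly.vol f'' g'')
    (hmin' : ∀ f'' g'' : TropPoly 1, g''.support.Nonempty →
      (∀ x, TropPoly.tropDiv f'' g'' x = TropPoly.tropDiv f g x) →
      TropPoly.vol f' g' ≤ TropPoly.vol f'' g'') :
    ∃ (a : ℝ) (k : ℤ),
      (∀ x : Fin 1 → ℝ, f'.eval x = f.eval x + ((a + (k : ℝ) * x 0 : ℝ) : EReal)) ∧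
      (∀ x : Fin 1 → ℝ, g'.eval x = g.eval x + ((a + (k : ℝ) * x 0 : ℝ) : EReal)) := by
  have hdiff := (TropPoly.tropDiv_eq_tropDiv_iff hf hg hf' hg').1 heq
  have hmin'' : TropPoly.IsMinVol f' g' := fun f'' g'' hg'' h =>
    hmin' f'' g'' hg'' fun x => (h x).trans (heq x).symm
  obtain ⟨a, k, hak⟩ := TropPoly.exists_eval₁_eq_add_add_mul hdiff
    (TropPoly.IsMinVol.leftSlope_eq_rightSlope_or hmin hf hg)
    (hmin''.leftSlope_eq_rightSlope_or hf' hg')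
  refine ⟨a, k, fun x => ?_, fun x => ?_⟩ <;>
    rw [TropPoly.eval_eq_eval₁ _ ‹_›, TropPoly.eval_eq_eval₁ _ ‹_›, ← EReal.coe_add,
      EReal.coe_eq_coe_iff]
  · linarith [hak (x 0), hdiff (x 0)]
  · exact hak (x 0)

/-- **Uniqueness (up to a tropical monomial) of the minimum volume expression in one
variable.** If `φ = f ⊘ g = f' ⊘ g'` are two minimum volume expressions of the same
tropical rational function on `ℝ` with equal volumes, then `f'` and `g'` differ from `f`
and `g` by a common integer affine function `a + kx`; in particular the dual subdivision
of `f ⊕ (y ⊙ g)` is unique up to translation. -/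
theorem min_vol_expression_unique (f g f' g' : TropPoly 1)
    (hf : f.support.Nonempty) (hg : g.support.Nonempty)
    (hf' : f'.support.Nonempty) (hg' : g'.support.Nonempty)
    (heq : ∀ x, TropPoly.tropDiv f g x = TropPoly.tropDiv f' g' x)
    (hmin : ∀ f'' g'' : TropPoly 1, g''.support.Nonempty →
      (∀ x, TropPoly.tropDiv f'' g'' x = TropPoly.tropDiv f g x) →
      TropPoly.vol f g ≤ TropPoly.vol f'' g'')
    (hmin' : ∀ f'' g'' : TropPoly 1, g''.support.Nonempty →
      (∀ x, TropPoly.tropDiv f'' g'' x = TropPoly.tropDiv f g x) →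
      TropPoly.vol f' g' ≤ TropPoly.vol f'' g'')
    (hvol : TropPoly.vol f g = TropPoly.vol f' g') :
    ∃ (a : ℝ) (k : ℤ),
      (∀ x : Fin 1 → ℝ, f'.eval x = f.eval x + ((a + (k : ℝ) * x 0 : ℝ) : EReal)) ∧
      (∀ x : Fin 1 → ℝ, g'.eval x = g.eval x + ((a + (k : ℝ) * x 0 : ℝ) : EReal)) :=
  min_vol_expression_unique_general f g f' g' hf hg hf' hg' heq hmin hmin'
end

section
/- Let f and g be one-variable tropical polynomials, neither identically −∞, with supports S_f, S_g ⊂ ℤ and coefficients (c_i^f)_{i∈S_f}, (c_i^g)_{i∈S_g}, and suppose f(x) = g(x) for all x ∈ ℝ. Then Newt(f) = Newt(g); moreover for every i ∈ ℤ, the set {x ∈ ℝ : i ∈ S_f and f(x) = c_i^f + ix} has nonempty interior if and only if the set {x ∈ ℝ : i ∈ S_g and g(x) = c_i^g + ix} has nonempty interior, and for every such i one has c_i^f = c_i^g. (In other words, f and g have the same dual subdivision.) -/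
open scoped Pointwise
open MeasureTheory

/-!
Along a ray `t ↦ s t` a tropical polynomial grows at most like its extreme exponent in the
direction `s`, so two polynomials that agree as functions have the same smallest and largest
exponents, hence the same Newton segment. A linearity region with nonempty interior is infinite,
so by pigeonhole a single term of `g` realises `g` at two distinct points of it; since an affine
function of one variable is determined by two values, that term is the term `c_i + i x` of `f`.
-/

lemma affine_eq_of_eq_of_eq {a b c d s t : ℝ} (hst : s ≠ t)
    (hs : a + b * s = c + d * s) (ht : a + b * t = c + d * t) : a = c ∧ b = d := by
  have hbd : b = d := by
    have : (b - d) * (s - t) = 0 := by linear_combination hs - ht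
    simpa [sub_eq_zero, hst] using this
  exact ⟨by subst hbd; linarith, hbd⟩

lemma le_of_forall_nonneg_add_mul_le {a b c d : ℝ}
    (h : ∀ t, 0 ≤ t → a + b * t ≤ c + d * t) : b ≤ d := by
  by_contra! hdb
  have key := h ((|c - a| + 1) / (b - d)) (by positivity)
  have : (b - d) * ((|c - a| + 1) / (b - d)) = |c - a| + 1 := by field_simp
  nlinarith [le_abs_self (c - a)]

lemma Set.infinite_of_interior_nonempty {X : Type*} [TopologicalSpace X] [T1Space X]
    [∀ x : X, (nhdsWithin x {x}ᶜ).NeBot] {s : Set X} (hs : (interior s).Nonempty) :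
    s.Infinite :=
  let ⟨x, hx⟩ := hs
  infinite_of_mem_nhds x (mem_interior_iff_mem_nhds.mp hx)

namespace TropPoly

variable {n : ℕ}

def linearityRegion (f : TropPoly n) (i : Fin n → ℤ) : Set (Fin n → ℝ) :=
  {x | i ∈ f.support ∧ f.eval x = (f.term i x : EReal)}

lemma term_le_eval (f : TropPoly n) {i : Fin n → ℤ} (hi : i ∈ f.support) (x : Fin n → ℝ) :
    (f.term i x : EReal) ≤ f.eval x :=
  Finset.le_sup (f := fun i => (f.term i x : EReal)) hi

lemma eval_le_coe (f : TropPoly n) {x : Fin n → ℝ} {r : ℝ}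
    (hr : ∀ i ∈ f.support, f.term i x ≤ r) : f.eval x ≤ r :=
  Finset.sup_le fun i hi => EReal.coe_le_coe_iff.mpr (hr i hi)

lemma exists_eval_eq_term (f : TropPoly n) (hf : f.support.Nonempty) (x : Fin n → ℝ) :
    ∃ i ∈ f.support, f.eval x = f.term i x :=
  Finset.exists_mem_eq_sup _ hf _

lemma exists_eval_eq_term_at_two_points (f : TropPoly n) (hf : f.support.Nonempty)
    {T : Set (Fin n → ℝ)} (hT : T.Infinite) :
    ∃ i ∈ f.support, ∃ x ∈ T, ∃ y ∈ T, x ≠ y ∧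
      f.eval x = f.term i x ∧ f.eval y = f.term i y := by
  choose φ hφ_mem hφ_eq using exists_eval_eq_term f hf
  obtain ⟨x, hx, y, hy, hxy, hφ⟩ :=
    hT.exists_ne_map_eq_of_mapsTo (fun x _ => hφ_mem x) f.support.finite_toSet
  exact ⟨φ x, hφ_mem x, x, hx, y, hy, hxy, hφ_eq x, hφ ▸ hφ_eq y⟩

lemma term_eq_of_fin_one (f : TropPoly 1) (i : Fin 1 → ℤ) (x : Fin 1 → ℝ) :
    f.term i x = f.coeff i + (i 0 : ℝ) * x 0 := by
  simp [term]

lemma exponent_mul_le_of_eval_eq {f g : TropPoly 1} (h : ∀ x, f.eval x = g.eval x)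
    {i : Fin 1 → ℤ} (hi : i ∈ f.support) (s : ℝ) {b : ℝ}
    (hb : ∀ j ∈ g.support, (j 0 : ℝ) * s ≤ b) : (i 0 : ℝ) * s ≤ b := by
  obtain ⟨C, hC⟩ := (g.support.image g.coeff).bddAbove
  refine le_of_forall_nonneg_add_mul_le (a := f.coeff i) (c := C) fun t ht => ?_
  have hf : ((f.coeff i + (i 0 : ℝ) * s * t : ℝ) : EReal) ≤ f.eval fun _ => s * t := by
    simpa [term_eq_of_fin_one, mul_assoc] using f.term_le_eval hi fun _ => s * t
  have hg : g.eval (fun _ => s * t) ≤ ((C + b * t : ℝ) : EReal) := by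
    refine g.eval_le_coe fun j hj => ?_
    rw [term_eq_of_fin_one, ← mul_assoc]
    exact add_le_add (hC (Finset.mem_image_of_mem _ hj))
      (mul_le_mul_of_nonneg_right (hb j hj) ht)
  exact EReal.coe_le_coe_iff.mp (hf.trans (h _ ▸ hg))

lemma expR_mem_segment {a b i : Fin 1 → ℤ} (hai : a 0 ≤ i 0) (hib : i 0 ≤ b 0) :
    expR i ∈ segment ℝ (expR a) (expR b) := by
  have hseg : (i 0 : ℝ) ∈ segment ℝ (a 0 : ℝ) (b 0 : ℝ) := by
    rw [segment_eq_Icc (by exact_mod_cast hai.trans hib)]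
    exact ⟨by exact_mod_cast hai, by exact_mod_cast hib⟩
  obtain ⟨u, v, hu, hv, huv, heq⟩ := hseg
  refine ⟨u, v, hu, hv, huv, funext fun k => ?_⟩
  simpa [expR, Subsingleton.elim k 0] using heq

lemma newt_subset_of_eval_eq {f g : TropPoly 1} (hg : g.support.Nonempty)
    (h : ∀ x, f.eval x = g.eval x) : f.Newt ⊆ g.Newt := by
  refine convexHull_min ?_ (convex_convexHull ℝ _)
  rintro _ ⟨i, hi, rfl⟩
  obtain ⟨a, ha, ha_min⟩ := g.support.exists_min_image (fun j => j 0) hg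
  obtain ⟨b, hb, hb_max⟩ := g.support.exists_max_image (fun j => j 0) hg
  have hai : a 0 ≤ i 0 := by
    simpa using exponent_mul_le_of_eval_eq h hi (-1) (b := -(a 0 : ℝ)) fun j hj => by
      simpa using ha_min j hj
  have hib : i 0 ≤ b 0 := by
    simpa using exponent_mul_le_of_eval_eq h hi 1 (b := (b 0 : ℝ)) fun j hj => by
      simpa using hb_max j hj
  exact segment_subset_convexHull (Set.mem_image_of_mem expR ha) (Set.mem_image_of_mem expR hb)
    (expR_mem_segment hai hib)

lemma mem_support_and_coeff_eq_of_infinite_linearityRegion {f g : TropPoly 1}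
    (hg : g.support.Nonempty) (h : ∀ x, f.eval x = g.eval x) {i : Fin 1 → ℤ}
    (hA : (f.linearityRegion i).Infinite) : i ∈ g.support ∧ g.coeff i = f.coeff i := by
  obtain ⟨j, hj, x, ⟨-, hx⟩, y, ⟨-, hy⟩, hxy, hgx, hgy⟩ :=
    g.exists_eval_eq_term_at_two_points hg hA
  have hxy0 : x 0 ≠ y 0 := fun e => hxy (funext fun k => by rw [Subsingleton.elim k 0, e])
  have hterm (z : Fin 1 → ℝ) (hz : f.eval z = f.term i z) (hgz : g.eval z = g.term j z) :
      g.coeff j + (j 0 : ℝ) * z 0 = f.coeff i + (i 0 : ℝ) * z 0 := by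
    rw [← term_eq_of_fin_one, ← term_eq_of_fin_one]
    exact_mod_cast hgz.symm.trans ((h z).symm.trans hz)
  obtain ⟨hc, he⟩ := affine_eq_of_eq_of_eq hxy0 (hterm x hx hgx) (hterm y hy hgy)
  have hji : j = i := funext fun k => by rw [Subsingleton.elim k 0]; exact_mod_cast he
  subst hji
  exact ⟨hj, hc⟩

lemma linearityRegion_subset_of_infinite {f g : TropPoly 1} (hg : g.support.Nonempty)
    (h : ∀ x, f.eval x = g.eval x) {i : Fin 1 → ℤ} (hA : (f.linearityRegion i).Infinite) :
    f.linearityRegion i ⊆ g.linearityRegion i := by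
  obtain ⟨hi, hc⟩ := mem_support_and_coeff_eq_of_infinite_linearityRegion hg h hA
  rintro x ⟨-, hx⟩
  refine ⟨hi, ?_⟩
  rw [← h, hx, term, term, hc]

end TropPoly

open TropPoly in
/-- **One-variable tropical polynomials that are equal as functions have the same dual
subdivision**: the Newton polytopes agree, an exponent has a full-dimensional linearity
region for `f` iff it does for `g`, and on such exponents the coefficients agree. -/
theorem eq_as_functions_same_dual_subdivision (f g : TropPoly 1)
    (hf : f.support.Nonempty) (hg : g.support.Nonempty)
    (h : ∀ x, f.eval x = g.eval x) :
    f.Newt = g.Newt ∧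
    ∀ i : Fin 1 → ℤ,
      ((interior {x : Fin 1 → ℝ | i ∈ f.support ∧ f.eval x = (f.term i x : EReal)}).Nonempty ↔
       (interior {x : Fin 1 → ℝ | i ∈ g.support ∧ g.eval x = (g.term i x : EReal)}).Nonempty) ∧
      ((interior {x : Fin 1 → ℝ | i ∈ f.support ∧ f.eval x = (f.term i x : EReal)}).Nonempty →
        f.coeff i = g.coeff i) := by
  have h' x : g.eval x = f.eval x := (h x).symm
  refine ⟨(newt_subset_of_eval_eq hg h).antisymm (newt_subset_of_eval_eq hf h'),
    fun i => ⟨⟨fun hne => ?_, fun hne => ?_⟩, fun hne => ?_⟩⟩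
  all_goals have hA := Set.infinite_of_interior_nonempty hne
  · exact hne.mono (interior_mono (linearityRegion_subset_of_infinite hg h hA))
  · exact hne.mono (interior_mono (linearityRegion_subset_of_infinite hf h' hA))
  · exact (mem_support_and_coeff_eq_of_infinite_linearityRegion hg h hA).2.symm
end
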